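/- For all z in the unit disc, Re((1+z)/cos z) ≤ 4 cos(1)/(1 + cos(2)). -/

import Mathlib

/-!
With z = x + iy one has |cos z|² = cos² x + sinh² y, and the numerator of Re((1 + z)/cos z) is
(1 + x) cos x cosh y - y sin x sinh y. For |x| ≤ 1, the bounds cosh y ≤ 1 + sinh² y / 2 and
|y| ≤ |sinh y| make this numerator at most 2 (cos x + sinh² y), while cos 1 ≤ cos x gives
cos 1 · (cos x + sinh² y) ≤ cos² x + sinh² y. Hence Re((1 + z)/cos z) ≤ 2 / cos 1.
-/

open Complex Metric

noncomputable def phiNC (z : ℂ) : ℂ := (1 + z) / Complex.cos z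

def Subord (f g : ℂ → ℂ) : Prop :=
  ∃ ω : ℂ → ℂ, AnalyticOnNhd ℂ ω (ball 0 1) ∧ ω 0 = 0 ∧
    (∀ z ∈ ball (0:ℂ) 1, ω z ∈ ball (0:ℂ) 1) ∧
    ∀ z ∈ ball (0:ℂ) 1, f z = g (ω z)

def MemSnc (f : ℂ → ℂ) : Prop :=
  AnalyticOnNhd ℂ f (ball 0 1) ∧ f 0 = 0 ∧ deriv f 0 = 1 ∧
  Subord (fun z => z * deriv f z / f z) phiNC

def HasCoeffs (f : ℂ → ℂ) (a : ℕ → ℂ) : Prop :=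
  a 0 = 0 ∧ a 1 = 1 ∧ ∀ z ∈ ball (0:ℂ) 1, HasSum (fun n => a n * z ^ n) (f z)

namespace Complex

theorem cos_re (z : ℂ) : (cos z).re = Real.cos z.re * Real.cosh z.im := by
  rw [cos_eq]; simp [cos_ofReal_re, cosh_ofReal_re, sin_ofReal_re, sinh_ofReal_re]

theorem cos_im (z : ℂ) : (cos z).im = -(Real.sin z.re * Real.sinh z.im) := by
  rw [cos_eq]; simp [cos_ofReal_re, cosh_ofReal_re, sin_ofReal_re, sinh_ofReal_re]

theorem normSq_cos (z : ℂ) : normSq (cos z) = Real.cos z.re ^ 2 + Real.sinh z.im ^ 2 := by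
  rw [normSq_apply, cos_re, cos_im]
  nlinarith [Real.cosh_sq z.im, Real.sin_sq_add_cos_sq z.re]

end Complex

theorem Real.abs_le_abs_sinh (y : ℝ) : |y| ≤ |Real.sinh y| := by
  rw [Real.abs_sinh]; exact Real.self_le_sinh_iff.mpr (abs_nonneg y)

theorem Real.cosh_le_one_add_sinh_sq_div_two (y : ℝ) : Real.cosh y ≤ 1 + Real.sinh y ^ 2 / 2 := by
  nlinarith [Real.cosh_sq y, Real.one_le_cosh y]

theorem Real.cos_one_le_cos {x : ℝ} (hx : |x| ≤ 1) : Real.cos 1 ≤ Real.cos x := by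
  rw [← Real.cos_abs x]
  exact Real.cos_le_cos_of_nonneg_of_le_pi (abs_nonneg x) (by linarith [Real.pi_gt_three]) hx

theorem Real.four_mul_cos_one_div_one_add_cos_two :
    4 * Real.cos 1 / (1 + Real.cos 2) = 2 / Real.cos 1 := by
  have := Real.cos_one_pos
  rw [show (2 : ℝ) = 2 * 1 by norm_num, Real.cos_two_mul]
  field_simp; ring

theorem re_phiNC (z : ℂ) : (phiNC z).re =
    ((1 + z.re) * (Real.cos z.re * Real.cosh z.im) - z.im * (Real.sin z.re * Real.sinh z.im)) /
      (Real.cos z.re ^ 2 + Real.sinh z.im ^ 2) := by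
  rw [phiNC, div_re, normSq_cos, cos_re, cos_im]
  simp only [add_re, add_im, one_re, one_im]
  ring

theorem one_add_mul_cos_mul_cosh_sub_le {x : ℝ} (hx : |x| ≤ 1) (y : ℝ) :
    (1 + x) * (Real.cos x * Real.cosh y) - y * (Real.sin x * Real.sinh y) ≤
      2 * (Real.cos x + Real.sinh y ^ 2) := by
  have hc : 0 ≤ Real.cos x := Real.cos_one_pos.le.trans (Real.cos_one_le_cos hx)
  have hx1 : 1 + x ≤ 2 := by linarith [le_abs_self x]
  have hcosh : Real.cosh y ≤ 1 + Real.sinh y ^ 2 / 2 := Real.cosh_le_one_add_sinh_sq_div_two y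
  have hcross : -(y * (Real.sin x * Real.sinh y)) ≤ Real.sinh y ^ 2 := calc
    -(y * (Real.sin x * Real.sinh y)) ≤ |y| * (|Real.sin x| * |Real.sinh y|) := by
      rw [← abs_mul, ← abs_mul]; exact neg_le_abs _
    _ ≤ |Real.sinh y| * (1 * |Real.sinh y|) := by
      gcongr ?_ * (?_ * _)
      exacts [Real.abs_le_abs_sinh y, Real.abs_sin_le_one x]
    _ = Real.sinh y ^ 2 := by rw [one_mul, ← sq, sq_abs]
  have hmain : (1 + x) * (Real.cos x * Real.cosh y) ≤
      2 * (Real.cos x * (1 + Real.sinh y ^ 2 / 2)) := by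
    gcongr
  nlinarith [Real.cos_le_one x, sq_nonneg (Real.sinh y)]

theorem re_phiNC_le {z : ℂ} (hz : |z.re| ≤ 1) : (phiNC z).re ≤ 2 / Real.cos 1 := by
  rw [re_phiNC]
  set c := Real.cos z.re
  set s := Real.sinh z.im
  have hc1 : Real.cos 1 ≤ c := Real.cos_one_le_cos hz
  have hpos : 0 < Real.cos 1 := Real.cos_one_pos
  have hD : 0 < c ^ 2 + s ^ 2 := by nlinarith [sq_nonneg s]
  rw [div_le_div_iff₀ hD hpos]
  calc _ ≤ 2 * (c + s ^ 2) * Real.cos 1 :=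
        mul_le_mul_of_nonneg_right (one_add_mul_cos_mul_cosh_sub_le hz z.im) hpos.le
    _ ≤ 2 * (c ^ 2 + s ^ 2) := by nlinarith [Real.cos_le_one 1, sq_nonneg s]

theorem stmt13 (z : ℂ) (hz : z ∈ ball (0:ℂ) 1) :
    (phiNC z).re ≤ 4 * Real.cos 1 / (1 + Real.cos 2) := by
  rw [Real.four_mul_cos_one_div_one_add_cos_two]
  exact re_phiNC_le ((abs_re_le_norm z).trans (mem_ball_zero_iff.mp hz).le)
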